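/- Let coh be a reflexive symmetric relation on a type M carrying the discrete topology, and let h, g : (ℕ → Bool) → M be continuous. Write h₀ := fun w => h (cons false w), h₁ := fun w => h (cons true w), and similarly g₀, g₁. Then scohFlag coh h g ↔ (scohFlag coh h₀ g₀ ∨ (h₀ = g₀ ∧ scohFlag coh h₁ g₁)). (The contraction bijection is a linear isomorphism: flag A ≅ flag A ◁ flag A.) -/
import Mathlib


/-- Lexicographic (strict) order on the Cantor space `ℕ → Bool`. -/
def lexLt (w w' : ℕ → Bool) : Prop :=
  ∃ n : ℕ, (∀ k < n, w k = w' k) ∧ w n = false ∧ w' n = true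

/-- Prepending a boolean to an infinite word. -/
def cons (b : Bool) (w : ℕ → Bool) : ℕ → Bool
  | 0 => b
  | n + 1 => w n

/-- Flag strict coherence of two functions from the Cantor space to a web. -/
def scohFlag {M : Type*} (coh : M → M → Prop) (f g : (ℕ → Bool) → M) : Prop :=
  ∃ w, (coh (f w) (g w) ∧ f w ≠ g w) ∧ ∀ v, lexLt v w → f v = g v

lemma eq_cons_of_head (v : ℕ → Bool) (b : Bool) (hb : v 0 = b) :
    v = cons b (fun n => v (n + 1)) := by
  funext n; cases n with
  | zero => exact hb
  | succ m => rfl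

lemma lexLt_head_tail (v w : ℕ → Bool) :
    lexLt v w ↔ (v 0 = false ∧ w 0 = true) ∨
      (v 0 = w 0 ∧ lexLt (fun n => v (n + 1)) (fun n => w (n + 1))) := by
  constructor
  · rintro ⟨n, hk, h0, h1⟩
    cases n with
    | zero => exact Or.inl ⟨h0, h1⟩
    | succ m =>
      refine Or.inr ⟨hk 0 (Nat.succ_pos m), ⟨m, fun k hk' => hk (k + 1) (by omega), h0, h1⟩⟩
  · rintro (⟨h0, h1⟩ | ⟨h0, m, hk, hm0, hm1⟩)
    · exact ⟨0, fun k hk => absurd hk (Nat.not_lt_zero k), h0, h1⟩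
    · refine ⟨m + 1, fun k hk' => ?_, hm0, hm1⟩
      cases k with
      | zero => exact h0
      | succ j => exact hk j (by omega)

lemma lexLt_cons (b : Bool) (v w : ℕ → Bool) :
    lexLt (cons b v) (cons b w) ↔ lexLt v w := by
  rw [lexLt_head_tail]
  constructor
  · rintro (⟨h0, h1⟩ | ⟨_, hl⟩)
    · simp [cons] at h0 h1; rw [h0] at h1; exact absurd h1 (by simp)
    · exact hl
  · intro hl; exact Or.inr ⟨rfl, hl⟩

lemma lexLt_cons_ft (v w : ℕ → Bool) : lexLt (cons false v) (cons true w) :=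
  (lexLt_head_tail _ _).2 (Or.inl ⟨rfl, rfl⟩)

/-- The contraction bijection is a linear isomorphism `flag A ≅ flag A ◁ flag A`:
strict coherence in `flag A` corresponds to strict coherence in `flag A ◁ flag A`. -/
theorem flag_contraction_iso {M : Type*} [TopologicalSpace M] [DiscreteTopology M]
    (coh : M → M → Prop) (hrefl : ∀ x, coh x x) (hsymm : ∀ x y, coh x y → coh y x)
    (h g : (ℕ → Bool) → M) (hh : Continuous h) (hg : Continuous g) :
    scohFlag coh h g ↔
      (scohFlag coh (fun w => h (cons false w)) (fun w => g (cons false w)) ∨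
        ((fun w => h (cons false w)) = (fun w => g (cons false w)) ∧
          scohFlag coh (fun w => h (cons true w)) (fun w => g (cons true w)))) := by
  constructor
  · rintro ⟨w, hsc, hmin⟩
    set w' := fun n => w (n + 1) with hw'
    cases hb : w 0 with
    | false =>
      left
      have hw : w = cons false w' := eq_cons_of_head w false hb
      refine ⟨w', by beta_reduce; rw [← hw]; exact hsc, fun v hv => ?_⟩
      exact hmin (cons false v) (by rw [hw]; exact (lexLt_cons _ _ _).2 hv)
    | true =>
      right
      have hw : w = cons true w' := eq_cons_of_head w true hb
      constructor
      · funext v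
        exact hmin (cons false v) (by rw [hw]; exact lexLt_cons_ft _ _)
      · refine ⟨w', by beta_reduce; rw [← hw]; exact hsc, fun v hv => ?_⟩
        exact hmin (cons true v) (by rw [hw]; exact (lexLt_cons _ _ _).2 hv)
  · rintro (⟨w, hsc, hmin⟩ | ⟨heq, w, hsc, hmin⟩)
    · refine ⟨cons false w, hsc, fun v hv => ?_⟩
      rcases (lexLt_head_tail _ _).1 hv with ⟨_, h1⟩ | ⟨h0, hl⟩
      · exact absurd h1 (by simp [cons])
      · rw [eq_cons_of_head v false (by rw [h0]; rfl)]
        exact hmin _ hl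
    · refine ⟨cons true w, hsc, fun v hv => ?_⟩
      cases hb : v 0 with
      | false =>
        rw [eq_cons_of_head v false hb]
        exact congrFun heq _
      | true =>
        rcases (lexLt_head_tail _ _).1 hv with ⟨h0, _⟩ | ⟨_, hl⟩
        · rw [hb] at h0; exact absurd h0 (by simp)
        · rw [eq_cons_of_head v true hb]
          exact hmin _ hl
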